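/- For all integers a, b, L with a, L ≥ 0, ∑_{k=0}^{L} (−1)^k q^{binom(k,2)} [L choose k]_q [L+a−k choose b]_q = q^{L(L+a−b)} [a choose b−L]_q. -/

import Mathlib

/-! Induction on `L`. The `q`-Pascal rule `[L+1, k] = [L, k-1] + q^k [L, k]`, together with
`binom(k+1, 2) = binom(k, 2) + k`, rewrites the alternating sum for `L + 1` as the alternating sum
for `L` taken against the differences `[m+1, b] - [m, b]` of the second factor (`m = L + a - k`).
By the other Pascal rule each difference is `q^(m+1-b) [m, b-1]`, and `q^k q^(m+1-b) = q^(L+1+a-b)`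
does not depend on `k`; so the sum for `(L+1, b)` is `q^(L+1+a-b)` times the sum for `(L, b-1)`. -/

open Finset

/-- The variable `q`, realized as the generator of the field of rational functions over `ℚ`. -/
noncomputable def qq : RatFunc ℚ := RatFunc.X

/-- `(x)_n = ∏_{j=1}^n (1 - x^j)`. -/
noncomputable def qPoch (x : RatFunc ℚ) (n : ℕ) : RatFunc ℚ :=
  ∏ j ∈ Finset.range n, (1 - x ^ (j + 1))

/-- Gaussian binomial coefficient `[n choose k]_x`, zero unless `0 ≤ k ≤ n`. -/
noncomputable def qBin (x : RatFunc ℚ) (n k : ℤ) : RatFunc ℚ :=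
  if 0 ≤ k ∧ k ≤ n then qPoch x n.toNat / (qPoch x k.toNat * qPoch x (n - k).toNat) else 0

/-- The `q`-trinomial coefficient `[L, b; a]_2` in base `x`. -/
noncomputable def qTri (x : RatFunc ℚ) (L : ℕ) (b a : ℤ) : RatFunc ℚ :=
  ∑ k ∈ Finset.range (L + 1),
    x ^ ((k : ℤ) * (k + b)) * qBin x (L : ℤ) (k : ℤ) * qBin x ((L : ℤ) - k) ((k : ℤ) + a)

/-- The `q`-trinomial `T_n(L, a)`, written in terms of `s = q^{1/2}` (so the base is `s^2`):
`T_n(L,a) = ∑ s^{r(r-n)} (s²)_L / ((s²)_{(L-a-r)/2} (s²)_{(L+a-r)/2} (s²)_r)`,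
the sum over `r ≥ 0` with `L - a - r` even and `r ≤ L - |a|`; zero for `|a| > L`. -/
noncomputable def qT (s : RatFunc ℚ) (n : ℤ) (L : ℕ) (a : ℤ) : RatFunc ℚ :=
  ∑ r ∈ Finset.range (L + 1),
    if Even ((L : ℤ) - a - r) ∧ (r : ℤ) ≤ (L : ℤ) - |a| then
      s ^ ((r : ℤ) * ((r : ℤ) - n)) * qPoch (s ^ 2) L /
        (qPoch (s ^ 2) (((L : ℤ) - a - r) / 2).toNat *
          qPoch (s ^ 2) (((L : ℤ) + a - r) / 2).toNat * qPoch (s ^ 2) r)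
    else 0

/-- The Cartan matrix of the Lie algebra `A_n`. -/
def cartanA (n : ℕ) (i j : Fin n) : ℤ :=
  if i = j then 2 else if |(i : ℤ) - (j : ℤ)| = 1 then -1 else 0

lemma Nat.succ_choose_two (k : ℕ) : (k + 1).choose 2 = k.choose 2 + k := by
  rw [Nat.choose_succ_succ', Nat.choose_one_right, add_comm]

@[simp]
lemma qPoch_zero (x : RatFunc ℚ) : qPoch x 0 = 1 := prod_range_zero _

lemma qPoch_succ (x : RatFunc ℚ) (n : ℕ) : qPoch x (n + 1) = qPoch x n * (1 - x ^ (n + 1)) :=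
  prod_range_succ _ n

lemma qBin_natCast_add (x : RatFunc ℚ) (m k : ℕ) :
    qBin x ((m : ℤ) + k) k = qPoch x (m + k) / (qPoch x k * qPoch x m) := by
  rw [qBin, if_pos ⟨by positivity, by omega⟩]
  congr; omega

section

variable {x : RatFunc ℚ}

lemma qPoch_ne_zero (hx : ∀ n : ℕ, x ^ (n + 1) ≠ 1) (n : ℕ) : qPoch x n ≠ 0 :=
  prod_ne_zero_iff.mpr fun j _ => sub_ne_zero.mpr (hx j).symm

lemma qBin_of_not_le {n k : ℤ} (h : ¬(0 ≤ k ∧ k ≤ n)) : qBin x n k = 0 := if_neg h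

lemma qBin_zero_right (hx : ∀ n : ℕ, x ^ (n + 1) ≠ 1) (n : ℕ) : qBin x n 0 = 1 := by
  simpa [div_self (qPoch_ne_zero hx n)] using qBin_natCast_add x n 0

lemma qBin_self (hx : ∀ n : ℕ, x ^ (n + 1) ≠ 1) (n : ℕ) : qBin x n n = 1 := by
  simpa [div_self (qPoch_ne_zero hx n)] using qBin_natCast_add x 0 n

lemma qBin_symm (n k : ℤ) : qBin x n (n - k) = qBin x n k := by
  unfold qBin
  rw [sub_sub_cancel, mul_comm (qPoch x (n - k).toNat)]
  congr 1
  exact propext (by omega)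

lemma qBin_add_succ_succ (hx : ∀ n : ℕ, x ^ (n + 1) ≠ 1) (m c : ℕ) :
    qBin x (((m + 1 : ℕ) : ℤ) + (c + 1 : ℕ)) (c + 1 : ℕ) =
      qBin x (((m + 1 : ℕ) : ℤ) + c) c +
        x ^ (c + 1) * qBin x ((m : ℤ) + (c + 1 : ℕ)) (c + 1 : ℕ) := by
  simp only [qBin_natCast_add, show m + 1 + (c + 1) = m + c + 1 + 1 by omega,
    show m + 1 + c = m + c + 1 by omega, show m + (c + 1) = m + c + 1 by omega, qPoch_succ]
  have := qPoch_ne_zero hx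
  have := hx c
  have := hx m
  field_simp
  ring

lemma qBin_succ (hx : ∀ n : ℕ, x ^ (n + 1) ≠ 1) (n : ℕ) (k : ℤ) :
    qBin x ((n : ℤ) + 1) k = qBin x n (k - 1) + x ^ k * qBin x n k := by
  rcases lt_trichotomy k 0 with hk | rfl | hk
  · rw [qBin_of_not_le (by omega), qBin_of_not_le (by omega), qBin_of_not_le (by omega)]
    ring
  · rw [qBin_of_not_le (k := 0 - 1) (by omega), zpow_zero, qBin_zero_right hx, one_mul, zero_add]
    exact_mod_cast qBin_zero_right hx (n + 1)
  obtain ⟨c, rfl⟩ : ∃ c : ℕ, k = c + 1 := ⟨(k - 1).toNat, by omega⟩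
  rcases lt_trichotomy c n with hc | rfl | hc
  · obtain ⟨m, rfl⟩ : ∃ m, n = m + c + 1 := ⟨n - c - 1, by omega⟩
    rw [show x ^ ((c : ℤ) + 1) = x ^ (c + 1) by norm_cast]
    convert qBin_add_succ_succ hx m c using 2 <;> push_cast <;> ring_nf
  · rw [qBin_of_not_le (n := c) (k := c + 1) (by omega), add_sub_cancel_right, qBin_self hx,
      mul_zero, add_zero]
    exact_mod_cast qBin_self hx (c + 1)
  · rw [qBin_of_not_le (by omega), qBin_of_not_le (by omega), qBin_of_not_le (by omega)]
    ring

lemma qBin_succ' (hx : ∀ n : ℕ, x ^ (n + 1) ≠ 1) (m : ℕ) (b : ℤ) :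
    qBin x ((m : ℤ) + 1) b = qBin x m b + x ^ ((m : ℤ) + 1 - b) * qBin x m (b - 1) := by
  rw [← qBin_symm, qBin_succ hx, ← qBin_symm _ (m + 1 - b), ← qBin_symm _ ((m : ℤ) + 1 - b - 1)]
  congr 3 <;> ring

lemma sum_range_alternating_qBin_succ (hx : ∀ n : ℕ, x ^ (n + 1) ≠ 1) (L : ℕ)
    (g : ℕ → RatFunc ℚ) :
    ∑ k ∈ range (L + 2), (-1) ^ k * x ^ k.choose 2 * qBin x ((L : ℤ) + 1) k * g k =
      ∑ k ∈ range (L + 1), (-1) ^ k * x ^ k.choose 2 * x ^ k * qBin x L k * (g k - g (k + 1)) := by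
  simp only [qBin_succ hx, zpow_natCast, mul_add, add_mul, sum_add_distrib]
  rw [sum_range_succ', sum_range_succ _ (L + 1)]
  simp only [Nat.cast_add, Nat.cast_one, add_sub_cancel_right, Nat.cast_zero, zero_sub,
    qBin_of_not_le (n := L) (k := -1) (by omega), qBin_of_not_le (n := L) (k := L + 1) (by omega),
    Nat.succ_choose_two, pow_add, mul_zero, zero_mul, add_zero]
  rw [← sum_add_distrib]
  exact sum_congr rfl fun k _ => by ring

theorem sum_range_alternating_qBin_mul_qBin (hx₀ : x ≠ 0) (hx : ∀ n : ℕ, x ^ (n + 1) ≠ 1)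
    (a L : ℕ) (b : ℤ) :
    ∑ k ∈ range (L + 1), (-1) ^ k * x ^ k.choose 2 * qBin x L k * qBin x ((L : ℤ) + a - k) b =
      x ^ ((L : ℤ) * (L + a - b)) * qBin x a (b - L) := by
  induction L generalizing b with
  | zero => simp [show qBin x 0 0 = 1 from mod_cast qBin_self hx 0]
  | succ L ih =>
    have hdiff : ∀ k ∈ range (L + 1),
        qBin x ((L : ℤ) + 1 + a - k) b - qBin x ((L : ℤ) + 1 + a - (k + 1 : ℕ)) b =
          x ^ ((L : ℤ) + a - k + 1 - b) * qBin x ((L : ℤ) + a - k) (b - 1) := by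
      intro k hk
      obtain ⟨m, hm⟩ : ∃ m : ℕ, (m : ℤ) = L + a - k := ⟨L + a - k, by simp at hk; omega⟩
      rw [← hm, show (L : ℤ) + 1 + a - k = m + 1 by omega,
        show (L : ℤ) + 1 + a - (k + 1 : ℕ) = m by push_cast; omega, qBin_succ' hx,
        add_sub_cancel_left]
    have hpow : ∀ k : ℕ, x ^ k * x ^ ((L : ℤ) + a - k + 1 - b) = x ^ ((L : ℤ) + 1 + a - b) := by
      intro k
      rw [← zpow_natCast, ← zpow_add₀ hx₀]
      ring_nf
    calc _ = ∑ k ∈ range (L + 1), x ^ ((L : ℤ) + 1 + a - b) *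
          ((-1) ^ k * x ^ k.choose 2 * qBin x L k * qBin x ((L : ℤ) + a - k) (b - 1)) := by
          push_cast
          rw [sum_range_alternating_qBin_succ hx]
          refine sum_congr rfl fun k hk => ?_
          rw [hdiff k hk, ← hpow k]
          ring
      _ = x ^ (((L + 1 : ℕ) : ℤ) * ((L + 1 : ℕ) + a - b)) * qBin x a (b - (L + 1 : ℕ)) := by
          rw [← mul_sum, ih, ← mul_assoc, ← zpow_add₀ hx₀]
          push_cast
          ring_nf

end

lemma RatFunc.X_pow_succ_ne_one (n : ℕ) : (RatFunc.X : RatFunc ℚ) ^ (n + 1) ≠ 1 := by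
  rw [← RatFunc.algebraMap_X, ← map_pow, ← map_one (algebraMap (Polynomial ℚ) (RatFunc ℚ)),
    (RatFunc.algebraMap_injective ℚ).ne_iff]
  intro h
  simpa using congrArg Polynomial.natDegree h

theorem stmt15 (a L : ℕ) (b : ℤ) :
    ∑ k ∈ Finset.range (L + 1),
        (-1 : RatFunc ℚ) ^ k * qq ^ (k * (k - 1) / 2) * qBin qq (L : ℤ) (k : ℤ) *
          qBin qq ((L : ℤ) + a - k) b =
      qq ^ ((L : ℤ) * ((L : ℤ) + a - b)) * qBin qq (a : ℤ) (b - L) := by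
  simp only [← Nat.choose_two_right]
  exact sum_range_alternating_qBin_mul_qBin RatFunc.X_ne_zero RatFunc.X_pow_succ_ne_one a L b
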